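/- arXiv:1803.04533 — 2 statements merged into one kernel-verified Lean document; each statement's English description precedes it below -/
import Mathlib

section
/- Let p be a prime and let f : ℚ_p → ℚ_p be locally analytic on ℤ_p. Then there exist a finite set F ⊆ ℤ_p and a set C ⊆ ℤ_p that is both open and closed in the subspace topology of ℤ_p such that {x ∈ ℤ_p : f(x) = 0} = F ∪ C. -/
/-!
A power series converging on a closed ball of positive radius has positive radius of
convergence, so `f` is analytic at every point of `ℤ_p`. By the isolated zeros principle each
zero of `f` in `ℤ_p` is either interior to the zero set `Z` or isolated in it, so every point of
the frontier of `Z` is isolated in `Z`. Then the interior of `Z` is also closed, and the frontier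
of `Z` is a closed discrete subset of the compact space `ℤ_p`, hence finite.
-/

open Filter Function Topology

/-- `f : ℚ_p → ℚ_p` is locally analytic on `ℤ_p`: around every point of `ℤ_p` it is the sum
of a convergent power series on some closed ball of positive radius. -/
def LocallyAnalyticOn (p : ℕ) [Fact p.Prime] (f : ℚ_[p] → ℚ_[p]) : Prop :=
  ∀ x₀ : ℤ_[p], ∃ r : ℝ, 0 < r ∧ ∃ a : ℕ → ℚ_[p],
    ∀ x : ℚ_[p], ‖x - (x₀ : ℚ_[p])‖ ≤ r →
      HasSum (fun n : ℕ => a n * (x - (x₀ : ℚ_[p])) ^ n) (f x)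

section IsolatedFrontier

variable {X : Type*} [TopologicalSpace X] {Z : Set X}

theorem isClosed_interior_of_frontier_isolated
    (hiso : ∀ x ∈ frontier Z, ∀ᶠ y in 𝓝[≠] x, y ∉ Z) : IsClosed (interior Z) := by
  refine closure_subset_iff_isClosed.mp fun x hx => by_contra fun hxi => ?_
  have hxf : x ∈ frontier Z := ⟨closure_mono interior_subset hx, hxi⟩
  obtain ⟨y, hyi, hyZ⟩ := ((mem_closure_iff_frequently.mp hx).and_eventually
    (eventually_nhdsWithin_iff.mp (hiso x hxf))).exists
  rcases eq_or_ne y x with rfl | hyx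
  · exact hxi hyi
  · exact hyZ hyx (interior_subset hyi)

theorem finite_frontier_of_frontier_isolated [CompactSpace X] (hZ : IsClosed Z)
    (hiso : ∀ x ∈ frontier Z, ∀ᶠ y in 𝓝[≠] x, y ∉ Z) : (frontier Z).Finite := by
  refine isClosed_frontier.isCompact.finite (isDiscrete_iff_nhdsNE.mpr fun x hx => ?_)
  rw [inf_principal_eq_bot]
  filter_upwards [hiso x hx] with y hy hyf using hy (hZ.frontier_subset hyf)

end IsolatedFrontier

section Analytic

variable {𝕜 : Type*} [NontriviallyNormedField 𝕜] {f : 𝕜 → 𝕜}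

open FormalMultilinearSeries in
theorem analyticAt_of_hasSum_on_closedBall {x₀ : 𝕜} {r : ℝ} (hr : 0 < r) {a : ℕ → 𝕜}
    (h : ∀ x, ‖x - x₀‖ ≤ r → HasSum (fun n => a n * (x - x₀) ^ n) (f x)) :
    AnalyticAt 𝕜 f x₀ := by
  obtain ⟨c, hc0, hcr⟩ := NormedField.exists_norm_lt 𝕜 hr
  have hradius : (‖c‖₊ : ENNReal) ≤ (ofScalars 𝕜 a).radius := by
    refine le_radius_of_tendsto _ (l := 0) ?_
    have := (h (x₀ + c) (by simpa using hcr.le)).summable.tendsto_atTop_zero.norm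
    simpa [ofScalars_norm, norm_mul, norm_pow] using this
  refine ⟨ofScalars 𝕜 a, ‖c‖₊, hradius, by simpa using hc0, fun {y} hy => ?_⟩
  have hyc : ‖y‖ < ‖c‖ := by simpa [← coe_nnnorm, enorm_eq_nnnorm] using mem_eball_zero_iff.mp hy
  have hyr : ‖y‖ ≤ r := hyc.le.trans hcr.le
  simpa [ofScalars_apply_eq, mul_comm] using h (x₀ + y) (by simpa using hyr)

theorem AnalyticAt.eventually_comp_eq_zero_or_eventually_comp_ne_zero {X : Type*}
    [TopologicalSpace X] {e : X → 𝕜} (he : Continuous e) (he_inj : Injective e) {x : X}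
    (hf : AnalyticAt 𝕜 f (e x)) :
    (∀ᶠ y in 𝓝 x, f (e y) = 0) ∨ ∀ᶠ y in 𝓝[≠] x, f (e y) ≠ 0 := by
  have hpunct : Tendsto e (𝓝[≠] x) (𝓝[≠] (e x)) :=
    he.continuousWithinAt.tendsto_nhdsWithin fun _ hy => he_inj.ne hy
  exact hf.eventually_eq_zero_or_eventually_ne_zero.imp
    (he.continuousAt.eventually ·) hpunct.eventually

end Analytic

theorem LocallyAnalyticOn.analyticAt {p : ℕ} [Fact p.Prime] {f : ℚ_[p] → ℚ_[p]}
    (hf : LocallyAnalyticOn p f) (x : ℤ_[p]) : AnalyticAt ℚ_[p] f x :=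
  let ⟨_, hr, _, ha⟩ := hf x
  analyticAt_of_hasSum_on_closedBall hr ha

theorem stmt12 (p : ℕ) [Fact p.Prime] (f : ℚ_[p] → ℚ_[p]) (hf : LocallyAnalyticOn p f) :
    ∃ F C : Set ℤ_[p], F.Finite ∧ IsOpen C ∧ IsClosed C ∧
      {x : ℤ_[p] | f (x : ℚ_[p]) = 0} = F ∪ C := by
  set Z := {x : ℤ_[p] | f (x : ℚ_[p]) = 0}
  have hcont : Continuous fun x : ℤ_[p] => f x := continuous_iff_continuousAt.mpr fun x =>
    (hf.analyticAt x).continuousAt.comp continuous_subtype_val.continuousAt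
  have hZ : IsClosed Z := isClosed_eq hcont continuous_const
  have hiso : ∀ x ∈ frontier Z, ∀ᶠ y in 𝓝[≠] x, y ∉ Z := fun x hx =>
    ((hf.analyticAt x).eventually_comp_eq_zero_or_eventually_comp_ne_zero
      continuous_subtype_val Subtype.val_injective).resolve_left
      (mt mem_interior_iff_mem_nhds.mpr hx.2)
  refine ⟨frontier Z, interior Z, finite_frontier_of_frontier_isolated hZ hiso,
    isOpen_interior, isClosed_interior_of_frontier_isolated hiso, ?_⟩
  rw [Set.union_comm, ← closure_eq_interior_union_frontier, hZ.closure_eq]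
end

section
/- Let p be a prime and n, k positive integers, and set T_p(n,k) = ∑_{1≤j≤k, p∤j} (−1)^{k−j}·binom(k,j)·j^n. If v_p(T_p(n,k)) < n, then v_p(∑_{j=1}^k (−1)^{k−j}·binom(k,j)·j^n) = v_p(T_p(n,k)); equivalently, v_p(k!·S(n,k)) = v_p(T_p(n,k)), i.e. v_p(S(n,k)) = v_p(T_p(n,k)) − v_p(k!). -/
/-- `p`-adic valuation of a rational number, with `v_p(0) = ⊤`. -/
noncomputable def vpQ (p : ℕ) (x : ℚ) : WithTop ℤ :=
  if x = 0 then ⊤ else (padicValRat p x : WithTop ℤ)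

/-- The Stirling number of the second kind `S(n,k)`, as the rational number satisfying
`k! * S(n,k) = ∑_{j=1}^{k} (-1)^(k-j) * C(k,j) * j^n`. -/
noncomputable def stirl (n k : ℕ) : ℚ :=
  (∑ j ∈ Finset.Icc 1 k, (-1 : ℚ) ^ (k - j) * (k.choose j) * (j : ℚ) ^ n) / (k.factorial : ℚ)

/-- The partial sum `T_p(n,k) = ∑_{1 ≤ j ≤ k, p ∤ j} (-1)^(k-j) * C(k,j) * j^n`. -/
noncomputable def Tp (p n k : ℕ) : ℚ :=
  ∑ j ∈ (Finset.Icc 1 k).filter (fun j => ¬ p ∣ j),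
    (-1 : ℚ) ^ (k - j) * (k.choose j) * (j : ℚ) ^ n

/-!
The terms with `p ∣ j` contribute `p^n` times an integer, so their sum has valuation at least
`n`. If `v_p(T_p(n,k)) < n`, the ultrametric inequality is strict and the full alternating sum
`k! S(n,k)` has the valuation of `T_p(n,k)`.
-/

section vpQ

variable {p : ℕ}

lemma vpQ_of_ne_zero {x : ℚ} (hx : x ≠ 0) : vpQ p x = padicValRat p x := if_neg hx

lemma ne_zero_of_vpQ_lt {x : ℚ} {a : WithTop ℤ} (h : vpQ p x < a) : x ≠ 0 := by
  rintro rfl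
  simp [vpQ] at h

lemma vpQ_natCast {m : ℕ} (hm : m ≠ 0) : vpQ p (m : ℚ) = (padicValNat p m : ℤ) := by
  rw [vpQ_of_ne_zero (Nat.cast_ne_zero.mpr hm), padicValRat.of_nat]

lemma vpQ_intCast_nonneg (c : ℤ) : 0 ≤ vpQ p (c : ℚ) := by
  rcases eq_or_ne c 0 with rfl | hc
  · simp [vpQ]
  rw [vpQ_of_ne_zero (Int.cast_ne_zero.mpr hc), padicValRat.of_int]
  exact WithTop.coe_le_coe.mpr (Int.natCast_nonneg _)

variable [Fact p.Prime]

lemma vpQ_mul (x y : ℚ) : vpQ p (x * y) = vpQ p x + vpQ p y := by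
  rcases eq_or_ne x 0 with rfl | hx
  · simp [vpQ]
  rcases eq_or_ne y 0 with rfl | hy
  · simp [vpQ]
  rw [vpQ_of_ne_zero (mul_ne_zero hx hy), vpQ_of_ne_zero hx, vpQ_of_ne_zero hy,
    padicValRat.mul hx hy, WithTop.coe_add]

lemma vpQ_add_eq_left_of_lt {x y : ℚ} (h : vpQ p x < vpQ p y) : vpQ p (x + y) = vpQ p x := by
  have hx := ne_zero_of_vpQ_lt h
  rcases eq_or_ne y 0 with rfl | hy
  · rw [add_zero]
  rw [vpQ_of_ne_zero hx, vpQ_of_ne_zero hy, WithTop.coe_lt_coe] at h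
  have hxy : x + y ≠ 0 := by
    intro hxy
    rw [eq_neg_of_add_eq_zero_right hxy, padicValRat.neg] at h
    exact lt_irrefl _ h
  rw [vpQ_of_ne_zero hxy, vpQ_of_ne_zero hx, padicValRat.add_eq_of_lt hxy hx hy h]

lemma le_vpQ_pow_mul_intCast (n : ℕ) (c : ℤ) :
    ((n : ℤ) : WithTop ℤ) ≤ vpQ p ((p : ℚ) ^ n * c) := by
  have hpn : vpQ p ((p : ℚ) ^ n) = (n : ℤ) := by
    rw [← Nat.cast_pow, vpQ_natCast (pow_ne_zero n (Fact.out : p.Prime).ne_zero),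
      padicValNat.prime_pow]
  rw [vpQ_mul, hpn]
  exact le_add_of_nonneg_right (vpQ_intCast_nonneg c)

end vpQ

lemma exists_sum_Icc_eq_Tp_add_pow_mul (p n k : ℕ) (hp : 0 < p) :
    ∃ c : ℤ, ∑ j ∈ Finset.Icc 1 k, (-1 : ℚ) ^ (k - j) * (k.choose j) * (j : ℚ) ^ n =
      Tp p n k + (p : ℚ) ^ n * c := by
  refine ⟨∑ j ∈ (Finset.Icc 1 k).filter (p ∣ ·),
    (-1 : ℤ) ^ (k - j) * (k.choose j) * ((j / p : ℕ) : ℤ) ^ n, ?_⟩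
  rw [Tp, ← Finset.sum_filter_not_add_sum_filter _ (p ∣ ·), Int.cast_sum, Finset.mul_sum]
  congr 1
  refine Finset.sum_congr rfl fun j hj => ?_
  obtain ⟨m, rfl⟩ := (Finset.mem_filter.mp hj).2
  rw [Nat.mul_div_cancel_left m hp]
  push_cast
  ring

theorem stmt13_general (p n k : ℕ) (hp : p.Prime)
    (hv : vpQ p (Tp p n k) < ((n : ℤ) : WithTop ℤ)) :
    vpQ p (∑ j ∈ Finset.Icc 1 k, (-1 : ℚ) ^ (k - j) * (k.choose j) * (j : ℚ) ^ n) =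
        vpQ p (Tp p n k) ∧
    vpQ p ((k.factorial : ℚ) * stirl n k) = vpQ p (Tp p n k) ∧
    vpQ p (stirl n k) + ((padicValNat p k.factorial : ℤ) : WithTop ℤ) = vpQ p (Tp p n k) := by
  have := Fact.mk hp
  obtain ⟨c, hsplit⟩ := exists_sum_Icc_eq_Tp_add_pow_mul p n k hp.pos
  have hsum : vpQ p (∑ j ∈ Finset.Icc 1 k, (-1 : ℚ) ^ (k - j) * (k.choose j) * (j : ℚ) ^ n) =
      vpQ p (Tp p n k) := by
    rw [hsplit]
    exact vpQ_add_eq_left_of_lt (hv.trans_le (le_vpQ_pow_mul_intCast n c))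
  have hstirl : (k.factorial : ℚ) * stirl n k =
      ∑ j ∈ Finset.Icc 1 k, (-1 : ℚ) ^ (k - j) * (k.choose j) * (j : ℚ) ^ n :=
    mul_div_cancel₀ _ (Nat.cast_ne_zero.mpr k.factorial_ne_zero)
  refine ⟨hsum, hstirl ▸ hsum, ?_⟩
  rw [← vpQ_natCast k.factorial_ne_zero, ← vpQ_mul, mul_comm, hstirl, hsum]

theorem stmt13 (p n k : ℕ) (hp : p.Prime) (hn : 0 < n) (hk : 0 < k)
    (hv : vpQ p (Tp p n k) < ((n : ℤ) : WithTop ℤ)) :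
    vpQ p (∑ j ∈ Finset.Icc 1 k, (-1 : ℚ) ^ (k - j) * (k.choose j) * (j : ℚ) ^ n) =
        vpQ p (Tp p n k) ∧
    vpQ p ((k.factorial : ℚ) * stirl n k) = vpQ p (Tp p n k) ∧
    vpQ p (stirl n k) + ((padicValNat p k.factorial : ℤ) : WithTop ℤ) = vpQ p (Tp p n k) :=
  stmt13_general p n k hp hv
end
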